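/- arXiv:1805.01401 — 4 statements merged into one kernel-verified Lean document; each statement's English description precedes it below -/
import Mathlib

section
/- Let α > 0, D ≥ 0, and for t > 0 with e^{2αt} > 1 + D^2 α define λ_t = α(1 - (1 + D^2 α) e^{-2αt}) / (1 - e^{-2αt})^2. Then λ_t ≥ α/2 if and only if e^{-2αt} ≤ √(1 + D^4 α^2) - D^2 α, equivalently t ≥ (1/(2α)) · log(√(1 + D^4 α^2) + D^2 α). -/
/-! Writing `x = e^{-2αt}` and `c = D²α`, the inequality `λ_t ≥ α/2` clears to `x² + 2cx ≤ 1`,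
i.e. `x` lies below the positive root `√(1 + c²) - c = (√(1 + c²) + c)⁻¹`; taking logarithms turns
this into the threshold on `t`. -/

open Real

lemma half_le_div_one_sub_sq_iff {α c x : ℝ} (hα : 0 < α) (hx : x ≠ 1) :
    α / 2 ≤ α * (1 - (1 + c) * x) / (1 - x) ^ 2 ↔ x ^ 2 + 2 * c * x ≤ 1 := by
  have hd : 0 < (1 - x) ^ 2 := sq_pos_of_ne_zero (sub_ne_zero.mpr hx.symm)
  rw [div_le_div_iff₀ two_pos hd, mul_assoc, mul_le_mul_iff_right₀ hα]
  constructor <;> intro h <;> linarith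

lemma sq_add_two_mul_le_one_iff {c x : ℝ} (h : 0 ≤ x + c) :
    x ^ 2 + 2 * c * x ≤ 1 ↔ x ≤ √(1 + c ^ 2) - c := by
  rw [le_sub_iff_add_le, Real.le_sqrt h (by positivity), add_sq]
  constructor <;> intro h <;> linarith

lemma sqrt_one_add_sq_sub_self_eq_inv (c : ℝ) : √(1 + c ^ 2) - c = (√(1 + c ^ 2) + c)⁻¹ := by
  refine eq_inv_of_mul_eq_one_left ?_
  rw [mul_comm, ← sq_sub_sq, Real.sq_sqrt (by positivity), add_sub_cancel_right]

lemma exp_neg_mul_le_inv_iff {a y t : ℝ} (ha : 0 < a) (hy : 0 < y) :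
    exp (-(a * t)) ≤ y⁻¹ ↔ 1 / a * log y ≤ t := by
  rw [exp_neg, inv_le_inv₀ (exp_pos _) hy, ← log_le_iff_le_exp hy, one_div_mul_eq_div,
    div_le_iff₀' ha]

theorem ou_bounded_threshold_general (α D t : ℝ) (hα : 0 < α) (ht : 0 < t) :
    (α/2 ≤ α*(1 - (1 + D^2*α)*Real.exp (-2*α*t))/(1 - Real.exp (-2*α*t))^2 ↔
      Real.exp (-2*α*t) ≤ Real.sqrt (1 + D^4*α^2) - D^2*α) ∧
    (Real.exp (-2*α*t) ≤ Real.sqrt (1 + D^4*α^2) - D^2*α ↔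
      (1/(2*α)) * Real.log (Real.sqrt (1 + D^4*α^2) + D^2*α) ≤ t) := by
  have hx : exp (-2*α*t) < 1 := exp_lt_one_iff.mpr (by nlinarith)
  rw [show D^4*α^2 = (D^2*α)^2 by ring]
  refine ⟨(half_le_div_one_sub_sq_iff hα hx.ne).trans (sq_add_two_mul_le_one_iff ?_), ?_⟩
  · have hc : 0 ≤ D^2*α := by positivity
    linarith [exp_pos (-2*α*t)]
  · rw [sqrt_one_add_sq_sub_self_eq_inv, show -2*α*t = -(2*α*t) by ring]
    exact exp_neg_mul_le_inv_iff (by positivity) (by positivity)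

theorem ou_bounded_threshold (α D t : ℝ) (hα : 0 < α) (hD : 0 ≤ D) (ht : 0 < t)
    (h : 1 + D^2*α < Real.exp (2*α*t)) :
    (α/2 ≤ α*(1 - (1 + D^2*α)*Real.exp (-2*α*t))/(1 - Real.exp (-2*α*t))^2 ↔
      Real.exp (-2*α*t) ≤ Real.sqrt (1 + D^4*α^2) - D^2*α) ∧
    (Real.exp (-2*α*t) ≤ Real.sqrt (1 + D^4*α^2) - D^2*α ↔
      (1/(2*α)) * Real.log (Real.sqrt (1 + D^4*α^2) + D^2*α) ≤ t) :=
  ou_bounded_threshold_general α D t hα ht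
end

section
/- Let X be an ℝ-valued (or ℝ^n-valued) random variable with E[|X|^4] < ∞, and for a sub-σ-algebra (or conditioning variable) Y let Var(X | Y=y) denote the conditional variance. Then E[(Var(X | Y))^2] ≤ E[‖X - E[X]‖^4]. -/
/-!
The conditional variance is the least conditional mean-square deviation, so
`Var[X | m] ≤ E[(X - E X)² | m]`. Squaring and applying the conditional Cauchy–Schwarz
(Jensen) inequality `E[Z | m]² ≤ E[Z² | m]` to `Z = (X - E X)²` bounds `Var[X | m]²` by
`E[(X - E X)⁴ | m]`, whose integral is `E[(X - E X)⁴]` by the tower property.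
-/

open MeasureTheory ProbabilityTheory

lemma MeasureTheory.MemLp.sq {Ω : Type*} {m₀ : MeasurableSpace Ω} {μ : Measure Ω}
    {f : Ω → ℝ} {p : ENNReal} (hf : MemLp f (p * 2) μ) : MemLp (fun ω ↦ f ω ^ 2) p μ := by
  have h := hf.norm_rpow_div 2
  rw [ENNReal.mul_div_cancel_right two_ne_zero ENNReal.ofNat_ne_top] at h
  simpa using h

namespace ProbabilityTheory

variable {Ω : Type*} {m m₀ : MeasurableSpace Ω} {μ : Measure[m₀] Ω} {X : Ω → ℝ}

lemma condVar_nonneg : 0 ≤ᵐ[μ] Var[X; μ | m] :=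
  condExp_nonneg (.of_forall fun _ ↦ sq_nonneg _)

lemma sq_condExp_ae_le_condExp_sq (hm : m ≤ m₀) [IsFiniteMeasure μ] (hX : MemLp X 2 μ) :
    μ[X | m] ^ 2 ≤ᵐ[μ] μ[X ^ 2 | m] := by
  filter_upwards [condVar_nonneg (m := m) (μ := μ) (X := X),
    condVar_ae_eq_condExp_sq_sub_sq_condExp hm hX] with ω h_nonneg h_eq
  simp only [Pi.zero_apply, Pi.sub_apply, Pi.pow_apply] at h_nonneg h_eq ⊢
  linarith

lemma condVar_sub_const (hm : m ≤ m₀) [IsFiniteMeasure μ] (hX : Integrable X μ) (c : ℝ) :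
    Var[fun ω ↦ X ω - c; μ | m] =ᵐ[μ] Var[X; μ | m] := by
  refine condExp_congr_ae ?_
  filter_upwards [condExp_sub hX (integrable_const c) m] with ω hω
  have h_shift : μ[fun ω ↦ X ω - c | m] ω = μ[X | m] ω - c :=
    hω.trans (by simp [condExp_const hm])
  simp only [Pi.pow_apply, Pi.sub_apply, h_shift]
  ring

lemma condVar_ae_le_condExp_sub_const_sq (hm : m ≤ m₀) [IsFiniteMeasure μ] (hX : MemLp X 2 μ)
    (c : ℝ) : Var[X; μ | m] ≤ᵐ[μ] μ[fun ω ↦ (X ω - c) ^ 2 | m] := by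
  filter_upwards [condVar_sub_const hm (hX.integrable one_le_two) c,
    condVar_ae_le_condExp_sq hm (hX.sub (memLp_const c))] with ω h_eq h_le
  exact h_eq.symm.trans_le h_le

end ProbabilityTheory

theorem condVar_sq_le_fourth_moment {Ω : Type*} {m m0 : MeasurableSpace Ω}
    (hm : m ≤ m0) (μ : @Measure Ω m0) [IsProbabilityMeasure μ]
    (X : Ω → ℝ) (hX : MemLp X 4 μ) :
    ∫ ω, (condExp m μ (fun ω' => (X ω' - condExp m μ X ω')^2) ω)^2 ∂μ
      ≤ ∫ ω, (X ω - ∫ x, X x ∂μ)^4 ∂μ := by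
  set c := ∫ x, X x ∂μ
  have hX2 : MemLp X 2 μ := hX.mono_exponent (by norm_num)
  have hdev_sq : MemLp (fun ω ↦ (X ω - c) ^ 2) 2 μ :=
    MemLp.sq ((show (4 : ENNReal) = 2 * 2 by norm_num) ▸ hX.sub (memLp_const c))
  have hle : Var[X; μ | m] ^ 2 ≤ᵐ[μ] μ[fun ω ↦ ((X ω - c) ^ 2) ^ 2 | m] := by
    filter_upwards [condVar_nonneg, condVar_ae_le_condExp_sub_const_sq hm hX2 c,
      sq_condExp_ae_le_condExp_sq hm hdev_sq] with ω h_nonneg h_var h_jensen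
    exact (pow_le_pow_left₀ h_nonneg h_var 2).trans h_jensen
  calc ∫ ω, Var[X; μ | m] ω ^ 2 ∂μ
      ≤ ∫ ω, μ[fun ω ↦ ((X ω - c) ^ 2) ^ 2 | m] ω ∂μ :=
        integral_mono_of_nonneg (.of_forall fun _ ↦ sq_nonneg _) integrable_condExp hle
    _ = ∫ ω, ((X ω - c) ^ 2) ^ 2 ∂μ := integral_condExp hm
    _ = ∫ ω, (X ω - c) ^ 4 ∂μ := by simp_rw [← pow_mul]
end

section
/- Let Z be a standard Gaussian random variable in ℝ and let b > 0 and c ≥ max{1, 26/b}. Then E[log(1 + b·e^{cZ - c²/2})] ≤ 3b·e^{-0.085·c²}. -/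
/-!
Since `log (1 + x) ≤ 2 √x`, the integrand is at most `2 √b exp ((c Z - c² / 2) / 2)`, whose
Gaussian expectation is `2 √b exp (-c² / 8)` by the moment generating function. The remaining
factor `exp (-0.04 c²)` is absorbed because `9 b exp (0.08 c²) ≥ 9 b (1 + 0.08 c²) ≥ 4` once
`b c ≥ 26`.
-/

open MeasureTheory ProbabilityTheory

lemma Real.log_one_add_le_two_mul_sqrt {x : ℝ} (hx : 0 ≤ x) : Real.log (1 + x) ≤ 2 * √x := by
  have hs : 0 ≤ √x := Real.sqrt_nonneg x
  have hsq : 1 + x ≤ (1 + √x) ^ 2 := by nlinarith [Real.sq_sqrt hx]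
  calc Real.log (1 + x) ≤ Real.log ((1 + √x) ^ 2) := Real.log_le_log (by positivity) hsq
    _ = 2 * Real.log (1 + √x) := by rw [Real.log_pow]; norm_num
    _ ≤ 2 * √x := by linarith [Real.log_le_sub_one_of_pos (by positivity : 0 < 1 + √x)]

lemma integral_exp_mul_gaussianReal_zero_one (t : ℝ) :
    ∫ z, Real.exp (t * z) ∂(gaussianReal 0 1) = Real.exp (t ^ 2 / 2) := by
  simpa [mgf] using congrFun (mgf_fun_id_gaussianReal (μ := 0) (v := 1)) t

lemma log_one_add_mul_exp_le (b c z : ℝ) (hb : 0 ≤ b) :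
    Real.log (1 + b * Real.exp (c * z - c ^ 2 / 2))
      ≤ 2 * √b * Real.exp (-c ^ 2 / 4) * Real.exp (c / 2 * z) := by
  calc Real.log (1 + b * Real.exp (c * z - c ^ 2 / 2))
      ≤ 2 * √(b * Real.exp (c * z - c ^ 2 / 2)) :=
        Real.log_one_add_le_two_mul_sqrt (by positivity)
    _ = 2 * √b * Real.exp ((c * z - c ^ 2 / 2) / 2) := by
        rw [Real.sqrt_mul hb, Real.exp_half, mul_assoc]
    _ = 2 * √b * Real.exp (-c ^ 2 / 4) * Real.exp (c / 2 * z) := by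
        rw [mul_assoc (2 * √b), ← Real.exp_add]; ring_nf

lemma integral_log_one_add_mul_exp_le (b c : ℝ) (hb : 0 ≤ b) :
    ∫ z, Real.log (1 + b * Real.exp (c * z - c ^ 2 / 2)) ∂(gaussianReal 0 1)
      ≤ 2 * √b * Real.exp (-c ^ 2 / 8) := by
  calc ∫ z, Real.log (1 + b * Real.exp (c * z - c ^ 2 / 2)) ∂(gaussianReal 0 1)
      ≤ ∫ z, 2 * √b * Real.exp (-c ^ 2 / 4) * Real.exp (c / 2 * z) ∂(gaussianReal 0 1) :=
        integral_mono_of_nonneg (ae_of_all _ fun z ↦ Real.log_nonneg (by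
            nlinarith [mul_nonneg hb (Real.exp_nonneg (c * z - c ^ 2 / 2))]))
          ((integrable_exp_mul_gaussianReal _).const_mul _)
          (ae_of_all _ fun z ↦ log_one_add_mul_exp_le b c z hb)
    _ = 2 * √b * Real.exp (-c ^ 2 / 4) * Real.exp ((c / 2) ^ 2 / 2) := by
        rw [integral_const_mul, integral_exp_mul_gaussianReal_zero_one]
    _ = 2 * √b * Real.exp (-c ^ 2 / 8) := by
        rw [mul_assoc, ← Real.exp_add]; ring_nf

lemma two_mul_sqrt_mul_exp_le {b c : ℝ} (hb : 0 < b) (hbc : 26 ≤ b * c) :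
    2 * √b * Real.exp (-c ^ 2 / 8) ≤ 3 * b * Real.exp (-0.085 * c ^ 2) := by
  have hc : 0 < c := pos_of_mul_pos_right (by linarith) hb.le
  have hexp : 1 + 0.08 * c ^ 2 ≤ Real.exp (0.08 * c ^ 2) := by
    linarith [Real.add_one_le_exp (0.08 * c ^ 2)]
  have hsq : 4 ≤ 9 * b * Real.exp (0.08 * c ^ 2) := by
    have : 4 * c ≤ 9 * (b * c) * (1 + 0.08 * c ^ 2) := by
      nlinarith [mul_le_mul_of_nonneg_right hbc (by positivity : (0 : ℝ) ≤ 1 + 0.08 * c ^ 2),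
        sq_nonneg (c - 1)]
    nlinarith
  have hroot : 2 ≤ 3 * √b * Real.exp (0.04 * c ^ 2) := by
    refine (pow_le_pow_iff_left₀ (by norm_num) (by positivity) two_ne_zero).mp ?_
    calc (2 : ℝ) ^ 2 ≤ 9 * b * Real.exp (0.08 * c ^ 2) := by linarith
      _ = (3 * √b * Real.exp (0.04 * c ^ 2)) ^ 2 := by
        rw [mul_pow, mul_pow, Real.sq_sqrt hb.le, ← Real.exp_nat_mul]; ring_nf
  have hkey : 2 * √b * Real.exp (-(0.04 * c ^ 2)) ≤ 3 * b :=
    calc 2 * √b * Real.exp (-(0.04 * c ^ 2))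
        ≤ 3 * √b * Real.exp (0.04 * c ^ 2) * √b * Real.exp (-(0.04 * c ^ 2)) := by gcongr
      _ = 3 * b := by
        rw [Real.exp_neg]; field_simp; exact Real.sq_sqrt hb.le
  calc 2 * √b * Real.exp (-c ^ 2 / 8)
      = 2 * √b * Real.exp (-(0.04 * c ^ 2)) * Real.exp (-0.085 * c ^ 2) := by
        rw [mul_assoc _ (Real.exp _), ← Real.exp_add]; ring_nf
    _ ≤ 3 * b * Real.exp (-0.085 * c ^ 2) := by gcongr

theorem gaussian_log_moment_bound (b c : ℝ) (hb : 0 < b)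
    (hc : max 1 (26/b) ≤ c) :
    ∫ z, Real.log (1 + b * Real.exp (c*z - c^2/2)) ∂(gaussianReal 0 1)
      ≤ 3*b*Real.exp (-0.085*c^2) := by
  have hbc : 26 ≤ b * c := by
    have := (le_max_right _ _).trans hc
    rwa [div_le_iff₀ hb, mul_comm] at this
  exact (integral_log_one_add_mul_exp_le b c hb.le).trans (two_mul_sqrt_mul_exp_le hb hbc)
end

section
/- Let α > 0 and s_1, …, s_n > 0. The function t ↦ (1/2) Σ_{i=1}^n log(1 + s_i α e^{-2αt}/(1 - e^{-2αt})) is convex on (0, ∞). -/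
/-!
Writing `c = s_i α` and `u = 2αt`, the `i`-th summand is
`log (1 + c / (eᵘ - 1)) = log (eᵘ + c - 1) - log (eᵘ - 1)`, whose second derivative in `u` is
`c eᵘ (e²ᵘ + c - 1) / ((eᵘ + c - 1)² (eᵘ - 1)²) ≥ 0` for `u > 0`. Convexity survives the linear
change of variables `u = 2αt`, finite sums and the factor `1/2`.
-/

open Real Set

theorem ConvexOn.sum {𝕜 E β ι : Type*} [Semiring 𝕜] [PartialOrder 𝕜] [IsOrderedRing 𝕜]
    [AddCommMonoid E] [AddCommMonoid β] [PartialOrder β] [IsOrderedAddMonoid β]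
    [Module 𝕜 E] [Module 𝕜 β] {s : Set E} {t : Finset ι} {f : ι → E → β}
    (hs : Convex 𝕜 s) (hf : ∀ i ∈ t, ConvexOn 𝕜 s (f i)) :
    ConvexOn 𝕜 s fun x => ∑ i ∈ t, f i x := by
  classical
  induction t using Finset.induction_on with
  | empty => simpa using convexOn_const 0 hs
  | insert i t hi ih =>
    simp only [Finset.sum_insert hi]
    exact (hf i (t.mem_insert_self i)).add (ih fun j hj => hf j (Finset.mem_insert_of_mem hj))

theorem ConvexOn.comp_const_mul {f : ℝ → ℝ} {k : ℝ} (hf : ConvexOn ℝ (Ioi 0) f) (hk : 0 < k) :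
    ConvexOn ℝ (Ioi 0) fun t => f (k * t) := by
  have h := hf.comp_linearMap (LinearMap.mul ℝ ℝ k)
  rwa [show ⇑(LinearMap.mul ℝ ℝ k) = (k * ·) from rfl, preimage_const_mul_Ioi₀ _ hk,
    zero_div] at h

theorem convexOn_of_hasDerivAt2_nonneg {D : Set ℝ} (hD : Convex ℝ D) (hD_open : IsOpen D)
    {f f' f'' : ℝ → ℝ} (hf : ∀ x ∈ D, HasDerivAt f (f' x) x)
    (hf' : ∀ x ∈ D, HasDerivAt f' (f'' x) x) (hf''₀ : ∀ x ∈ D, 0 ≤ f'' x) :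
    ConvexOn ℝ D f := by
  refine convexOn_of_hasDerivWithinAt2_nonneg hD (f' := f') (f'' := f'')
    (fun x hx => (hf x hx).continuousAt.continuousWithinAt) ?_ ?_ ?_ <;>
    rw [hD_open.interior_eq]
  exacts [fun x hx => (hf x hx).hasDerivWithinAt, fun x hx => (hf' x hx).hasDerivWithinAt, hf''₀]

theorem mul_exp_neg_div_one_sub_exp_neg (x u : ℝ) :
    x * exp (-u) / (1 - exp (-u)) = x / (exp u - 1) := by
  rw [exp_neg, ← div_eq_mul_inv, div_div, mul_sub, mul_inv_cancel₀ (exp_ne_zero u), mul_one]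

theorem hasDerivAt_log_exp_add {a u : ℝ} (h : 0 < exp u + a) :
    HasDerivAt (fun u => log (exp u + a)) (exp u / (exp u + a)) u :=
  ((hasDerivAt_exp u).add_const a).log h.ne'

theorem hasDerivAt_exp_div_exp_add {a u : ℝ} (h : exp u + a ≠ 0) :
    HasDerivAt (fun u => exp u / (exp u + a)) (a * exp u / (exp u + a) ^ 2) u :=
  ((hasDerivAt_exp u).fun_div ((hasDerivAt_exp u).add_const a) h).congr_deriv (by ring)

theorem convexOn_log_one_add_div_exp_sub_one {c : ℝ} (hc : 0 ≤ c) :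
    ConvexOn ℝ (Ioi 0) fun u => log (1 + c / (exp u - 1)) := by
  have hpos : ∀ u ∈ Ioi (0 : ℝ), 0 < exp u + -1 ∧ 0 < exp u + (c - 1) := fun u hu => by
    have := one_lt_exp_iff.2 hu
    constructor <;> linarith
  refine (convexOn_of_hasDerivAt2_nonneg (convex_Ioi 0) isOpen_Ioi
    (f := fun u => log (exp u + (c - 1)) - log (exp u + -1))
    (f'' := fun u => (c - 1) * exp u / (exp u + (c - 1)) ^ 2 - -1 * exp u / (exp u + -1) ^ 2)
    (fun u hu => (hasDerivAt_log_exp_add (hpos u hu).2).sub (hasDerivAt_log_exp_add (hpos u hu).1))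
    (fun u hu => (hasDerivAt_exp_div_exp_add (hpos u hu).2.ne').sub
      (hasDerivAt_exp_div_exp_add (hpos u hu).1.ne'))
    (fun u hu => ?_)).congr fun u hu => ?_
  · obtain ⟨hsub, hadd⟩ := hpos u hu
    rw [div_sub_div _ _ (by positivity) (by positivity)]
    refine div_nonneg ?_ (by positivity)
    have key : (c - 1) * exp u * (exp u + -1) ^ 2 - (exp u + (c - 1)) ^ 2 * (-1 * exp u)
        = c * exp u * (exp u ^ 2 + c - 1) := by ring
    have hsq : 0 < exp u ^ 2 + c - 1 := by nlinarith
    rw [key]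
    positivity
  · obtain ⟨hsub, hadd⟩ := hpos u hu
    have hsub' : exp u - 1 ≠ 0 := by linarith
    simp only
    rw [← log_div hadd.ne' hsub.ne']
    congr 1
    field_simp
    ring

theorem gaussian_mi_convex (α : ℝ) (hα : 0 < α) (n : ℕ) (s : Fin n → ℝ)
    (hs : ∀ i, 0 < s i) :
    ConvexOn ℝ (Set.Ioi 0)
      (fun t => (1/2) * ∑ i, Real.log
        (1 + s i * α * Real.exp (-2*α*t)/(1 - Real.exp (-2*α*t)))) := by
  have hterm : ∀ i ∈ Finset.univ, ConvexOn ℝ (Ioi 0)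
      fun t => log (1 + s i * α / (exp (2 * α * t) - 1)) := fun i _ =>
    (convexOn_log_one_add_div_exp_sub_one (mul_pos (hs i) hα).le).comp_const_mul
      (by positivity)
  refine ((ConvexOn.sum (convex_Ioi 0) hterm).smul (by norm_num : (0 : ℝ) ≤ 1 / 2)).congr
    fun t _ => ?_
  simp only [smul_eq_mul, show -2 * α * t = -(2 * α * t) by ring,
    mul_exp_neg_div_one_sub_exp_neg]
end
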